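/- arXiv:0708.2772 — 3 statements merged into one kernel-verified Lean document; each statement's English description precedes it below -/
import Mathlib

section
/- For the Basis I chain complex (V₁, ∂₁) in the Spin^c structure of the contact structure, the image of ∂₁ is contained in the kernel of ∂₁, and the quotient space ker ∂₁ / im ∂₁ has dimension 2 over the field with two elements; that is, the homology of (V₁, ∂₁) is isomorphic to ℤ₂ ⊕ ℤ₂. -/
/-!
`∂₁` kills `X, C₁, E₁₂` and sends `C₂, E₁₁, F₁` to the three pairwise sums of `X, C₁, E₁₂`.
Hence the cycles are spanned by `X, C₁, E₁₂, C₂ + E₁₁ + F₁` and the boundaries are the sums of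
an even number of `X, C₁, E₁₂`; the homology is freely generated by `[X]` and
`[C₂ + E₁₁ + F₁]`.
-/

/-- The basis vectors `X, C₁, C₂, E₁₁, E₁₂, F₁` (in this order) of the
6-dimensional vector space `V₁ = (Fin 6 → ZMod 2)` over the field with two elements. -/
def e (i : Fin 6) : Fin 6 → ZMod 2 := Pi.single i 1

open LinearMap Submodule

section Homology

variable {R V W : Type*} [Ring R] [AddCommGroup V] [Module R V] [AddCommGroup W] [Module R W]

noncomputable def homologyEquivOfRangeEq (d : V →ₗ[R] V) (ψ : V →ₗ[R] W)
    (hrange : range d = ker d ⊓ ker ψ) (hsurj : Function.Surjective (ψ.domRestrict (ker d))) :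
    (ker d ⧸ comap (ker d).subtype (range d)) ≃ₗ[R] W :=
  (quotEquivOfEq _ _ <| by
      rw [hrange, comap_inf, comap_subtype_self, top_inf_eq, ker_domRestrict]).trans
    ((ψ.domRestrict (ker d)).quotKerEquivOfSurjective hsurj)

end Homology

/-- Column `j` lists the coordinates of `∂₁ (e j)`. -/
def boundary : (Fin 6 → ZMod 2) →ₗ[ZMod 2] (Fin 6 → ZMod 2) :=
  Matrix.toLin'
    !![0, 0, 1, 1, 0, 0;
       0, 0, 1, 0, 0, 1;
       0, 0, 0, 0, 0, 0;
       0, 0, 0, 0, 0, 0;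
       0, 0, 0, 1, 0, 1;
       0, 0, 0, 0, 0, 0]

lemma boundary_apply (x : Fin 6 → ZMod 2) :
    boundary x = ![x 2 + x 3, x 2 + x 5, 0, 0, x 3 + x 5, 0] := by
  ext i
  fin_cases i <;> simp [boundary, Matrix.mulVec, dotProduct, Fin.sum_univ_six]

lemma eq_boundary {D : (Fin 6 → ZMod 2) →ₗ[ZMod 2] (Fin 6 → ZMod 2)}
    (hX : D (e 0) = 0) (hC1 : D (e 1) = 0) (hC2 : D (e 2) = e 0 + e 1)
    (hE11 : D (e 3) = e 0 + e 4) (hE12 : D (e 4) = 0) (hF1 : D (e 5) = e 4 + e 1) :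
    D = boundary := by
  refine (Pi.basisFun (ZMod 2) (Fin 6)).ext fun j => ?_
  rw [Pi.basisFun_apply, ← e]
  fin_cases j <;> simp only [Fin.zero_eta, Fin.mk_one, Fin.reduceFinMk] <;>
    [rw [hX]; rw [hC1]; rw [hC2]; rw [hE11]; rw [hE12]; rw [hF1]] <;>
    ext i <;> fin_cases i <;> simp [boundary_apply, e]

lemma mem_ker_boundary {x : Fin 6 → ZMod 2} :
    x ∈ ker boundary ↔ x 2 = x 3 ∧ x 2 = x 5 := by
  have h : boundary x = 0 ↔ x 2 + x 3 = 0 ∧ x 2 + x 5 = 0 ∧ x 3 + x 5 = 0 := by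
    simp [boundary_apply, funext_iff, Fin.forall_fin_succ]
  rw [mem_ker, h]
  grind

/-- The homology class of a cycle, in the basis `[X], [C₂ + E₁₁ + F₁]`. -/
@[simps]
def homologyCoords : (Fin 6 → ZMod 2) →ₗ[ZMod 2] ZMod 2 × ZMod 2 where
  toFun x := (x 0 + x 1 + x 4, x 2)
  map_add' x y := by
    simp only [Pi.add_apply, Prod.mk_add_mk, Prod.mk.injEq, and_true]
    ring
  map_smul' c x := by simp [mul_add]

lemma range_boundary : range boundary = ker boundary ⊓ ker homologyCoords := by
  ext x
  rw [mem_inf, mem_ker_boundary, mem_ker, homologyCoords_apply, Prod.mk_eq_zero]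
  constructor
  · rintro ⟨y, rfl⟩
    simp only [boundary_apply, Matrix.cons_val]
    grind
  · rintro ⟨⟨h23, h25⟩, h014, h2⟩
    refine ⟨x 0 • e 3 + x 1 • e 5, ?_⟩
    ext i
    fin_cases i <;> simp [boundary_apply, e] <;> grind

lemma surjective_homologyCoords_domRestrict :
    Function.Surjective (homologyCoords.domRestrict (ker boundary)) := by
  rintro ⟨a, b⟩
  refine ⟨⟨a • e 0 + b • (e 2 + e 3 + e 5), mem_ker_boundary.2 ?_⟩, ?_⟩
  · simp [e]
  · simp [homologyCoords_apply, e]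

/-- For the Basis I chain complex `(V₁, ∂₁)` in the `Spin^c` structure of the contact
structure, `im ∂₁ ⊆ ker ∂₁` and the homology `ker ∂₁ / im ∂₁` is 2-dimensional over
`ZMod 2`, i.e. isomorphic to `ℤ₂ ⊕ ℤ₂`. -/
theorem stmt1 (D : (Fin 6 → ZMod 2) →ₗ[ZMod 2] (Fin 6 → ZMod 2))
    (hX : D (e 0) = 0)
    (hC1 : D (e 1) = 0)
    (hC2 : D (e 2) = e 0 + e 1)
    (hE11 : D (e 3) = e 0 + e 4)
    (hE12 : D (e 4) = 0)
    (hF1 : D (e 5) = e 4 + e 1) :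
    LinearMap.range D ≤ LinearMap.ker D ∧
    Module.finrank (ZMod 2)
      (↥(LinearMap.ker D) ⧸
        Submodule.comap (LinearMap.ker D).subtype (LinearMap.range D)) = 2 ∧
    Nonempty
      ((↥(LinearMap.ker D) ⧸
        Submodule.comap (LinearMap.ker D).subtype (LinearMap.range D)) ≃ₗ[ZMod 2]
        ZMod 2 × ZMod 2) := by
  obtain rfl := eq_boundary hX hC1 hC2 hE11 hE12 hF1
  let H := homologyEquivOfRangeEq boundary homologyCoords range_boundary
    surjective_homologyCoords_domRestrict
  refine ⟨range_boundary ▸ inf_le_left, ?_, ⟨H⟩⟩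
  rw [H.finrank_eq, Module.finrank_prod, Module.finrank_self]
end

section
/- In the Basis I chain complex (V₁, ∂₁), the basis vector X lies in the kernel of ∂₁ but does not lie in the image of ∂₁; that is, the contact class [X] is a nonzero element of the homology ker ∂₁ / im ∂₁. -/
theorem LinearMap.notMem_range_of_comp_eq_zero {R M N K : Type*} [Semiring R]
    [AddCommMonoid M] [Module R M] [AddCommMonoid N] [Module R N] [AddCommMonoid K] [Module R K]
    {D : M →ₗ[R] N} {φ : N →ₗ[R] K} (hφ : φ ∘ₗ D = 0) {x : N} (hx : φ x ≠ 0) : x ∉ LinearMap.range D := by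
  rintro ⟨v, rfl⟩
  exact hx (LinearMap.congr_fun hφ v)

theorem LinearMap.homologyClass_ne_zero {R M : Type*} [Ring R] [AddCommGroup M] [Module R M]
    {D : M →ₗ[R] M} {x : M} (hx : x ∈ LinearMap.ker D) (hx' : x ∉ LinearMap.range D) :
    (Submodule.Quotient.mk (⟨x, hx⟩ : LinearMap.ker D) :
      LinearMap.ker D ⧸ (LinearMap.range D).comap (LinearMap.ker D).subtype) ≠ 0 := by
  rwa [Ne, Submodule.Quotient.mk_eq_zero]

def basisICocycle : (Fin 6 → ZMod 2) →ₗ[ZMod 2] ZMod 2 :=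
  let π := LinearMap.proj (R := ZMod 2) (φ := fun _ : Fin 6 => ZMod 2)
  π 0 + π 1 + π 4

@[simp]
theorem basisICocycle_apply (v : Fin 6 → ZMod 2) : basisICocycle v = v 0 + v 1 + v 4 := rfl

theorem basisICocycle_comp_eq_zero (D : (Fin 6 → ZMod 2) →ₗ[ZMod 2] (Fin 6 → ZMod 2))
    (hX : D (e 0) = 0) (hC1 : D (e 1) = 0) (hC2 : D (e 2) = e 0 + e 1)
    (hE11 : D (e 3) = e 0 + e 4) (hE12 : D (e 4) = 0) (hF1 : D (e 5) = e 4 + e 1) :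
    basisICocycle ∘ₗ D = 0 := by
  refine (Pi.basisFun (ZMod 2) (Fin 6)).ext fun i => ?_
  rw [Pi.basisFun_apply, LinearMap.comp_apply, LinearMap.zero_apply]
  change basisICocycle (D (e i)) = 0
  fin_cases i <;>
    simp only [Fin.zero_eta, Fin.mk_one, Fin.reduceFinMk, hX, hC1, hC2, hE11, hE12, hF1,
      basisICocycle_apply] <;>
    decide

/-- In the Basis I chain complex `(V₁, ∂₁)`, the basis vector `X` lies in `ker ∂₁`
but not in `im ∂₁`; equivalently, the contact class `[X]` is a nonzero element of the
homology `ker ∂₁ / im ∂₁`. -/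
theorem stmt2 (D : (Fin 6 → ZMod 2) →ₗ[ZMod 2] (Fin 6 → ZMod 2))
    (hX : D (e 0) = 0)
    (hC1 : D (e 1) = 0)
    (hC2 : D (e 2) = e 0 + e 1)
    (hE11 : D (e 3) = e 0 + e 4)
    (hE12 : D (e 4) = 0)
    (hF1 : D (e 5) = e 4 + e 1) :
    e 0 ∈ LinearMap.ker D ∧ e 0 ∉ LinearMap.range D ∧
    ∀ (h : e 0 ∈ LinearMap.ker D),
      (Submodule.Quotient.mk (⟨e 0, h⟩ : ↥(LinearMap.ker D)) :
        ↥(LinearMap.ker D) ⧸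
          Submodule.comap (LinearMap.ker D).subtype (LinearMap.range D)) ≠ 0 := by
  have hX_not_boundary : e 0 ∉ LinearMap.range D :=
    LinearMap.notMem_range_of_comp_eq_zero
      (basisICocycle_comp_eq_zero D hX hC1 hC2 hE11 hE12 hF1) (by simp [e])
  exact ⟨hX, hX_not_boundary, fun h => LinearMap.homologyClass_ne_zero h hX_not_boundary⟩
end

section
/- In the Basis I chain complex (V₁, ∂₁), the vectors X and C₂ + E₁₁ + F₁ both lie in the kernel of ∂₁, and their classes in the quotient ker ∂₁ / im ∂₁ form a basis of this 2-dimensional vector space over the field with two elements. -/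
/-!
A linear map on `V₁` is determined by its values on the basis, so `D` is the explicit map
`d₁ v = (v₂ + v₃) X + (v₂ + v₅) C₁ + (v₃ + v₅) E₁₂`. Its cycles are the `v` with `v₂ = v₃ = v₅`,
and the functional `v ↦ (v₀ + v₁ + v₄, v₂)` kills the boundaries, and a cycle it kills is a
boundary: such a cycle is `v₀ X + v₁ C₁ + (v₀ + v₁) E₁₂ = d₁ (v₀ E₁₁ + v₁ F₁)`.
Hence the functional identifies `ker d₁ / im d₁` with `(ZMod 2)²`, sending `[X]` and `[C₂ + E₁₁ + F₁]` to the
standard basis vectors.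
-/

def d₁ : (Fin 6 → ZMod 2) →ₗ[ZMod 2] (Fin 6 → ZMod 2) where
  toFun v := ![v 2 + v 3, v 2 + v 5, 0, 0, v 3 + v 5, 0]
  map_add' u v := by funext i; fin_cases i <;> simp [add_add_add_comm]
  map_smul' c v := by funext i; fin_cases i <;> simp [mul_add]

def homologyCoord : (Fin 6 → ZMod 2) →ₗ[ZMod 2] (Fin 2 → ZMod 2) where
  toFun v := ![v 0 + v 1 + v 4, v 2]
  map_add' u v := by funext i; fin_cases i <;> simp [add_add_add_comm]
  map_smul' c v := by funext i; fin_cases i <;> simp [mul_add]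

abbrev Homology₁ : Type :=
  LinearMap.ker d₁ ⧸ Submodule.comap (LinearMap.ker d₁).subtype (LinearMap.range d₁)

theorem eq_d₁_of_apply_e (D : (Fin 6 → ZMod 2) →ₗ[ZMod 2] (Fin 6 → ZMod 2))
    (hX : D (e 0) = 0) (hC1 : D (e 1) = 0) (hC2 : D (e 2) = e 0 + e 1)
    (hE11 : D (e 3) = e 0 + e 4) (hE12 : D (e 4) = 0) (hF1 : D (e 5) = e 4 + e 1) :
    D = d₁ := by
  refine (Pi.basisFun (ZMod 2) (Fin 6)).ext fun i => ?_
  rw [Pi.basisFun_apply]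
  fin_cases i
  · exact hX.trans (by decide)
  · exact hC1.trans (by decide)
  · exact hC2.trans (by decide)
  · exact hE11.trans (by decide)
  · exact hE12.trans (by decide)
  · exact hF1.trans (by decide)

theorem e_zero_mem_ker_d₁ : e 0 ∈ LinearMap.ker d₁ := LinearMap.mem_ker.2 (by decide)

theorem e_two_add_e_three_add_e_five_mem_ker_d₁ : e 2 + e 3 + e 5 ∈ LinearMap.ker d₁ :=
  LinearMap.mem_ker.2 (by decide)

theorem homologyCoord_comp_d₁ : homologyCoord ∘ₗ d₁ = 0 := by
  ext v i
  fin_cases i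
  · simp [homologyCoord, d₁]
    grind
  · rfl

theorem ker_d₁_inf_ker_homologyCoord_le_range :
    LinearMap.ker d₁ ⊓ LinearMap.ker homologyCoord ≤ LinearMap.range d₁ := by
  rintro v ⟨hv, hc⟩
  have h0 := congrFun hv 0
  have h1 := congrFun hv 1
  have c0 := congrFun hc 0
  have c1 := congrFun hc 1
  simp only [d₁, homologyCoord, LinearMap.coe_mk, AddHom.coe_mk, Pi.zero_apply,
    Matrix.cons_val] at h0 h1 c0 c1
  refine ⟨v 0 • e 3 + v 1 • e 5, funext fun i => ?_⟩
  fin_cases i <;> simp [d₁, e] <;> grind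

theorem comap_range_d₁_eq_ker :
    Submodule.comap (LinearMap.ker d₁).subtype (LinearMap.range d₁) =
      LinearMap.ker (homologyCoord ∘ₗ (LinearMap.ker d₁).subtype) := by
  ext ⟨v, hv⟩
  simp only [Submodule.mem_comap, Submodule.subtype_apply, LinearMap.mem_ker,
    LinearMap.comp_apply]
  constructor
  · rintro ⟨w, rfl⟩
    exact LinearMap.congr_fun homologyCoord_comp_d₁ w
  · exact fun hc => ker_d₁_inf_ker_homologyCoord_le_range ⟨hv, hc⟩

theorem homologyCoord_comp_subtype_surjective :
    Function.Surjective (homologyCoord ∘ₗ (LinearMap.ker d₁).subtype) := by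
  intro y
  refine ⟨y 0 • ⟨e 0, e_zero_mem_ker_d₁⟩ +
    y 1 • ⟨e 2 + e 3 + e 5, e_two_add_e_three_add_e_five_mem_ker_d₁⟩, funext fun i => ?_⟩
  fin_cases i <;> simp [homologyCoord, e]

noncomputable def homologyEquiv : Homology₁ ≃ₗ[ZMod 2] (Fin 2 → ZMod 2) :=
  (Submodule.quotEquivOfEq _ _ comap_range_d₁_eq_ker).trans
    (LinearMap.quotKerEquivOfSurjective _ homologyCoord_comp_subtype_surjective)

theorem homologyEquiv_mk (v : LinearMap.ker d₁) :
    homologyEquiv (Submodule.Quotient.mk v) = homologyCoord v := rfl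

noncomputable def homologyBasis : Module.Basis (Fin 2) (ZMod 2) Homology₁ :=
  (Pi.basisFun (ZMod 2) (Fin 2)).map homologyEquiv.symm

theorem coe_homologyBasis (hx : e 0 ∈ LinearMap.ker d₁)
    (hy : e 2 + e 3 + e 5 ∈ LinearMap.ker d₁) :
    ⇑homologyBasis = ![(Submodule.Quotient.mk ⟨e 0, hx⟩ : Homology₁),
      Submodule.Quotient.mk ⟨e 2 + e 3 + e 5, hy⟩] := by
  funext i
  apply homologyEquiv.injective
  rw [homologyBasis, Module.Basis.map_apply, LinearEquiv.apply_symm_apply, Pi.basisFun_apply]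
  fin_cases i <;> simp only [Fin.zero_eta, Fin.mk_one, Matrix.cons_val_zero, Matrix.cons_val_one,
    Matrix.cons_val_fin_one, homologyEquiv_mk] <;> decide

/-- In the Basis I chain complex `(V₁, ∂₁)`, the vectors `X` and `C₂ + E₁₁ + F₁` lie in
`ker ∂₁`, and their classes in the 2-dimensional quotient `ker ∂₁ / im ∂₁` form a basis:
they are linearly independent and span the quotient. -/
theorem stmt3 (D : (Fin 6 → ZMod 2) →ₗ[ZMod 2] (Fin 6 → ZMod 2))
    (hX : D (e 0) = 0)
    (hC1 : D (e 1) = 0)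
    (hC2 : D (e 2) = e 0 + e 1)
    (hE11 : D (e 3) = e 0 + e 4)
    (hE12 : D (e 4) = 0)
    (hF1 : D (e 5) = e 4 + e 1) :
    e 0 ∈ LinearMap.ker D ∧ e 2 + e 3 + e 5 ∈ LinearMap.ker D ∧
    Module.finrank (ZMod 2)
      (↥(LinearMap.ker D) ⧸
        Submodule.comap (LinearMap.ker D).subtype (LinearMap.range D)) = 2 ∧
    ∀ (hx : e 0 ∈ LinearMap.ker D) (hy : e 2 + e 3 + e 5 ∈ LinearMap.ker D),
      LinearIndependent (ZMod 2)
        ![(Submodule.Quotient.mk (⟨e 0, hx⟩ : ↥(LinearMap.ker D)) :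
            ↥(LinearMap.ker D) ⧸
              Submodule.comap (LinearMap.ker D).subtype (LinearMap.range D)),
          Submodule.Quotient.mk (⟨e 2 + e 3 + e 5, hy⟩ : ↥(LinearMap.ker D))] ∧
      Submodule.span (ZMod 2)
        {(Submodule.Quotient.mk (⟨e 0, hx⟩ : ↥(LinearMap.ker D)) :
            ↥(LinearMap.ker D) ⧸
              Submodule.comap (LinearMap.ker D).subtype (LinearMap.range D)),
          Submodule.Quotient.mk (⟨e 2 + e 3 + e 5, hy⟩ : ↥(LinearMap.ker D))} = ⊤ := by
  obtain rfl := eq_d₁_of_apply_e D hX hC1 hC2 hE11 hE12 hF1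
  refine ⟨e_zero_mem_ker_d₁, e_two_add_e_three_add_e_five_mem_ker_d₁,
    by simp [homologyEquiv.finrank_eq], fun hx hy => ⟨?_, ?_⟩⟩
  · rw [← coe_homologyBasis hx hy]
    exact homologyBasis.linearIndependent
  · rw [← Matrix.range_cons_cons_empty, ← coe_homologyBasis hx hy]
    exact homologyBasis.span_eq
end
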